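/- Let d: ℤ^k → D be a homomorphism to a finitely generated abelian group, let M = ker(d), let I = {1,…,k}, and let J ⊆ I be such that the elements d(e_i) for i ∈ J generate a finite-index subgroup of the subgroup generated by all d(e_i), i ∈ I. Define M_J = (ℤ^J ⊕ ℕ^{I−J}) ∩ M, i.e., the set of m ∈ M with m_i ≥ 0 for all i ∉ J. Then M = M_J + (−M_J), i.e., M_J generates M as a group. -/

import Mathlib

/-!
The finite-index hypothesis produces `g ∈ M` whose coordinates outside `J` are all positive.
Then any `v ∈ M` is `(v + n • g) - n • g`, and for `n` large both terms lie in `M_J`.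
-/

namespace AddMonoidHom

variable {ι D : Type*} [AddCommGroup D] (d : (ι → ℤ) →+ D)

theorem map_mem_closure_map_single [Fintype ι] [DecidableEq ι] (w : ι → ℤ) :
    d w ∈ AddSubgroup.closure {x : D | ∃ i, x = d (Pi.single i (1 : ℤ))} := by
  rw [← Finset.univ_sum_single w, map_sum]
  refine AddSubgroup.sum_mem _ fun i _ => ?_
  have : Pi.single i (w i) = w i • (Pi.single i 1 : ι → ℤ) := by simp [← Pi.single_smul]
  rw [this, map_zsmul]
  exact AddSubgroup.zsmul_mem _ (AddSubgroup.subset_closure (by exact ⟨i, rfl⟩)) _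

theorem exists_supported_map_eq_of_mem_closure_map_single {J : Set ι} [DecidableEq ι] {x : D}
    (hx : x ∈ AddSubgroup.closure {x : D | ∃ i ∈ J, x = d (Pi.single i 1)}) :
    ∃ c : ι → ℤ, (∀ j ∉ J, c j = 0) ∧ d c = x := by
  induction hx using AddSubgroup.closure_induction with
  | mem x hx =>
    obtain ⟨i, hi, rfl⟩ := hx
    exact ⟨Pi.single i 1, fun j hj => Pi.single_eq_of_ne (by rintro rfl; exact hj hi) _, rfl⟩
  | zero => exact ⟨0, fun _ _ => rfl, map_zero d⟩
  | add x y _ _ hx hy =>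
    obtain ⟨c, hc, rfl⟩ := hx
    obtain ⟨c', hc', rfl⟩ := hy
    exact ⟨c + c', fun j hj => by simp [hc j hj, hc' j hj], map_add d c c'⟩
  | neg x _ hx =>
    obtain ⟨c, hc, rfl⟩ := hx
    exact ⟨-c, fun j hj => by simp [hc j hj], map_neg d c⟩

/-- With `m` the relative index, `m • d(𝟙_{Jᶜ})` lies in the subgroup generated by the `d(eᵢ)`,
`i ∈ J`, say `m • d(𝟙_{Jᶜ}) = d c` with `c` supported on `J`; then `m • 𝟙_{Jᶜ} - c` works. -/
theorem exists_mem_ker_pos_of_relIndex_ne_zero [Fintype ι] [DecidableEq ι] {J : Set ι}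
    (hJ : (AddSubgroup.closure {x : D | ∃ i ∈ J, x = d (Pi.single i 1)}).relIndex
        (AddSubgroup.closure {x : D | ∃ i, x = d (Pi.single i 1)}) ≠ 0) :
    ∃ g : ι → ℤ, d g = 0 ∧ ∀ j ∉ J, 0 < g j := by
  let u : ι → ℤ := Set.indicator Jᶜ 1
  obtain ⟨c, hc, hdc⟩ := d.exists_supported_map_eq_of_mem_closure_map_single (J := J)
    (AddSubgroup.nsmul_relIndex_mem _ (d.map_mem_closure_map_single u))
  refine ⟨_ • u - c, by rw [map_sub, map_nsmul, hdc, sub_self], fun j hj => ?_⟩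
  simpa [u, hc j hj, hj] using Nat.pos_of_ne_zero hJ

end AddMonoidHom

theorem exists_nonneg_add_mul_of_pos {ι : Type*} [Fintype ι] (v g : ι → ℤ) :
    ∃ n : ℕ, ∀ j, 0 < g j → 0 ≤ v j + n * g j := by
  refine ⟨∑ i, (v i).natAbs, fun j hj => ?_⟩
  have hvj : (v j).natAbs ≤ ∑ i, (v i).natAbs :=
    Finset.single_le_sum (f := fun i => (v i).natAbs) (fun i _ => Nat.zero_le _)
      (Finset.mem_univ j)
  have : -v j ≤ (∑ i, (v i).natAbs : ℕ) := by omega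
  nlinarith

theorem stmt_14 {k : ℕ} {D : Type*} [AddCommGroup D]
    (d : (Fin k → ℤ) →+ D) (J : Set (Fin k))
    (hJ : (AddSubgroup.closure {x : D | ∃ i ∈ J, x = d (Pi.single i 1)}).relIndex
        (AddSubgroup.closure {x : D | ∃ i, x = d (Pi.single i 1)}) ≠ 0) :
    ∀ v : Fin k → ℤ, d v = 0 →
      ∃ a b : Fin k → ℤ, d a = 0 ∧ d b = 0 ∧
        (∀ i, i ∉ J → 0 ≤ a i) ∧ (∀ i, i ∉ J → 0 ≤ b i) ∧ v = a - b := by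
  obtain ⟨g, hg, hgJ⟩ := d.exists_mem_ker_pos_of_relIndex_ne_zero hJ
  intro v hv
  obtain ⟨n, hn⟩ := exists_nonneg_add_mul_of_pos v g
  refine ⟨v + n • g, n • g, ?_, ?_, fun i hi => ?_, fun i hi => ?_, (add_sub_cancel_right v _).symm⟩
  · rw [map_add, map_nsmul, hv, hg, nsmul_zero, add_zero]
  · rw [map_nsmul, hg, nsmul_zero]
  · simpa using hn i (hgJ i hi)
  · simpa using mul_nonneg n.cast_nonneg (hgJ i hi).le
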